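/- arXiv:1609.08744 — 9 statements merged into one kernel-verified Lean document; each statement's English description precedes it below -/
import Mathlib

section
/- Let N ∈ ℕ, h = 1/(N+1), and let f : {0,1,…,N+1} → ℂ be a grid function with f(0) = f(N+1) = 0. Then the discrete Gagliardo–Nirenberg inequality holds: ‖f‖_{l∞_h}² ≤ 2 ‖f‖_h ‖δ₊f‖_h, i.e. max_{0 ≤ l ≤ N+1} |f(l)|² ≤ 2 (∑_{l=0}^{N+1} |f(l)|² h)^{1/2} (∑_{l=0}^{N} |δ₊f(l)|² h)^{1/2}. -/
/-!
Since `f 0 = 0`, telescoping gives `‖f l‖² = ∑_{j<l} (‖f (j+1)‖² - ‖f j‖²)`, and each term is at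
most `(‖f j‖ + ‖f (j+1)‖) ‖f (j+1) - f j‖`. Cauchy–Schwarz, applied separately to the two halves
of this sum, bounds it by twice the product of the unscaled `l²` norms of `f` and of its
differences; the weights `h` and `1/h` of the two discrete norms then cancel.
-/

open Finset

lemma sq_norm_sub_sq_norm_le {E : Type*} [SeminormedAddCommGroup E] (x y : E) :
    ‖y‖ ^ 2 - ‖x‖ ^ 2 ≤ (‖x‖ + ‖y‖) * ‖y - x‖ := by
  have := norm_sub_norm_le y x
  nlinarith [norm_nonneg x, norm_nonneg y]

lemma sq_norm_le_sum_of_map_zero {E : Type*} [SeminormedAddCommGroup E] {f : ℕ → E}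
    (hf0 : f 0 = 0) {l n : ℕ} (hl : l ≤ n) :
    ‖f l‖ ^ 2 ≤ ∑ j ∈ range n, (‖f j‖ + ‖f (j + 1)‖) * ‖f (j + 1) - f j‖ :=
  calc ‖f l‖ ^ 2 = ∑ j ∈ range l, (‖f (j + 1)‖ ^ 2 - ‖f j‖ ^ 2) := by
        rw [sum_range_sub (fun j => ‖f j‖ ^ 2), hf0, norm_zero]; ring
    _ ≤ ∑ j ∈ range l, (‖f j‖ + ‖f (j + 1)‖) * ‖f (j + 1) - f j‖ :=
        sum_le_sum fun j _ => sq_norm_sub_sq_norm_le _ _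
    _ ≤ _ := sum_le_sum_of_subset_of_nonneg (range_subset_range.2 hl) fun _ _ _ => by positivity

lemma sum_add_succ_mul_le_two_sqrt_mul_sqrt (a d : ℕ → ℝ) (n : ℕ) :
    ∑ j ∈ range n, (a j + a (j + 1)) * d j ≤
      2 * √(∑ j ∈ range (n + 1), a j ^ 2) * √(∑ j ∈ range n, d j ^ 2) := by
  have h_init : √(∑ j ∈ range n, a j ^ 2) ≤ √(∑ j ∈ range (n + 1), a j ^ 2) :=
    Real.sqrt_le_sqrt (by rw [sum_range_succ]; linarith [sq_nonneg (a n)])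
  have h_shift : √(∑ j ∈ range n, a (j + 1) ^ 2) ≤ √(∑ j ∈ range (n + 1), a j ^ 2) :=
    Real.sqrt_le_sqrt (by rw [sum_range_succ']; linarith [sq_nonneg (a 0)])
  calc ∑ j ∈ range n, (a j + a (j + 1)) * d j
      = ∑ j ∈ range n, a j * d j + ∑ j ∈ range n, a (j + 1) * d j := by
        simp only [add_mul, sum_add_distrib]
    _ ≤ √(∑ j ∈ range n, a j ^ 2) * √(∑ j ∈ range n, d j ^ 2)
          + √(∑ j ∈ range n, a (j + 1) ^ 2) * √(∑ j ∈ range n, d j ^ 2) :=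
        add_le_add (Real.sum_mul_le_sqrt_mul_sqrt _ _ _) (Real.sum_mul_le_sqrt_mul_sqrt _ _ _)
    _ ≤ _ := by nlinarith [Real.sqrt_nonneg (∑ j ∈ range n, d j ^ 2)]

theorem sq_norm_le_two_sqrt_mul_sqrt_of_map_zero {E : Type*} [SeminormedAddCommGroup E]
    {f : ℕ → E} (hf0 : f 0 = 0) {l n : ℕ} (hl : l ≤ n) :
    ‖f l‖ ^ 2 ≤
      2 * √(∑ j ∈ range (n + 1), ‖f j‖ ^ 2) * √(∑ j ∈ range n, ‖f (j + 1) - f j‖ ^ 2) :=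
  (sq_norm_le_sum_of_map_zero hf0 hl).trans (sum_add_succ_mul_le_two_sqrt_mul_sqrt _ _ n)

lemma sum_sq_norm_div_ofReal_mul {ι : Type*} (s : Finset ι) (z : ι → ℂ) (h : ℝ) :
    ∑ j ∈ s, ‖z j / h‖ ^ 2 * h = (∑ j ∈ s, ‖z j‖ ^ 2) / h := by
  rw [sum_div]
  refine sum_congr rfl fun j _ => ?_
  rw [norm_div, Complex.norm_real, Real.norm_eq_abs, div_pow, sq_abs]
  rcases eq_or_ne h 0 with rfl | hh
  · simp
  · field_simp

lemma sqrt_mul_mul_sqrt_div {h : ℝ} (hh : 0 < h) (A B : ℝ) : √(A * h) * √(B / h) = √A * √B := by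
  rw [Real.sqrt_mul' _ hh.le, Real.sqrt_div' _ hh.le]
  field_simp [(Real.sqrt_pos.2 hh).ne']

theorem discrete_gagliardo_nirenberg_general (N : ℕ) (h : ℝ) (hh : h = 1 / (N + 1))
    (f : ℕ → ℂ) (hf0 : f 0 = 0) :
    ∀ l ≤ N + 1, ‖f l‖ ^ 2 ≤
      2 * Real.sqrt (∑ l ∈ Finset.range (N + 2), ‖f l‖ ^ 2 * h)
        * Real.sqrt (∑ l ∈ Finset.range (N + 1),
            ‖(f (l + 1) - f l) / h‖ ^ 2 * h) := by
  intro l hl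
  have h_pos : 0 < h := by rw [hh]; positivity
  rw [← sum_mul, sum_sq_norm_div_ofReal_mul, mul_assoc, sqrt_mul_mul_sqrt_div h_pos, ← mul_assoc]
  exact sq_norm_le_two_sqrt_mul_sqrt_of_map_zero hf0 hl

/-- Discrete Gagliardo–Nirenberg inequality: for a grid function `f` on
`{0,1,…,N+1}` with homogeneous Dirichlet boundary conditions (`f 0 = 0`,
`f (N+1) = 0`), with step size `h = 1/(N+1)`, one has
`‖f‖_{l∞_h}² ≤ 2 ‖f‖_h ‖δ₊f‖_h`. -/
theorem discrete_gagliardo_nirenberg (N : ℕ) (h : ℝ) (hh : h = 1 / (N + 1))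
    (f : ℕ → ℂ) (hf0 : f 0 = 0) (hfN : f (N + 1) = 0) :
    ∀ l ≤ N + 1, ‖f l‖ ^ 2 ≤
      2 * Real.sqrt (∑ l ∈ Finset.range (N + 2), ‖f l‖ ^ 2 * h)
        * Real.sqrt (∑ l ∈ Finset.range (N + 1),
            ‖(f (l + 1) - f l) / h‖ ^ 2 * h) :=
  discrete_gagliardo_nirenberg_general N h hh f hf0
end

section
/- Let N ∈ ℕ, h = 1/(N+1), and let f : {0,1,…,N+1} → ℂ be a grid function with f(0) = f(N+1) = 0. Then the discrete L⁴-interpolation inequality holds: ‖f‖_{l⁴_h}⁴ ≤ 2 ‖f‖_h³ ‖δ₊f‖_h, i.e. ∑_{l=0}^{N+1} |f(l)|⁴ h ≤ 2 (∑_{l=0}^{N+1} |f(l)|² h)^{3/2} (∑_{l=0}^{N} |δ₊f(l)|² h)^{1/2}. -/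
/-!
Since `f 0 = 0`, telescoping gives `|f l|² = ∑_{j<l} (|f (j+1)|² - |f j|²)`, and each term is at most
`(|f (j+1)| + |f j|) |f (j+1) - f j|`. Cauchy–Schwarz then yields the discrete Agmon inequality
`max_l |f l|² ≤ 2 (∑ |f l|²)^{1/2} (∑ |f (l+1) - f l|²)^{1/2}`, and
`∑ |f l|⁴ ≤ (max_l |f l|²) ∑ |f l|²` gives the interpolation inequality for `h = 1`.
For general `h > 0` the weights contribute `h` on the left and `h^{3/2} · h^{-1/2} = h` on the right.
-/

open Finset

theorem sum_range_add_shift_sq_le (a : ℕ → ℝ) (n : ℕ) :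
    ∑ j ∈ range n, (a (j + 1) + a j) ^ 2 ≤ 4 * ∑ l ∈ range (n + 1), a l ^ 2 := by
  have h_shift : ∑ j ∈ range n, a (j + 1) ^ 2 ≤ ∑ l ∈ range (n + 1), a l ^ 2 := by
    rw [sum_range_succ']
    exact le_add_of_nonneg_right (sq_nonneg _)
  have h_init : ∑ j ∈ range n, a j ^ 2 ≤ ∑ l ∈ range (n + 1), a l ^ 2 := by
    rw [sum_range_succ]
    exact le_add_of_nonneg_right (sq_nonneg _)
  calc ∑ j ∈ range n, (a (j + 1) + a j) ^ 2
      ≤ ∑ j ∈ range n, 2 * (a (j + 1) ^ 2 + a j ^ 2) := sum_le_sum fun j _ => add_sq_le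
    _ = 2 * (∑ j ∈ range n, a (j + 1) ^ 2 + ∑ j ∈ range n, a j ^ 2) := by
      rw [← mul_sum, sum_add_distrib]
    _ ≤ 4 * ∑ l ∈ range (n + 1), a l ^ 2 := by linarith

variable {E : Type*} [SeminormedAddCommGroup E] {f : ℕ → E}

theorem norm_sq_le_sum_mul_norm_sub (hf0 : f 0 = 0) {l n : ℕ} (hl : l ≤ n) :
    ‖f l‖ ^ 2 ≤ ∑ j ∈ range n, (‖f (j + 1)‖ + ‖f j‖) * ‖f (j + 1) - f j‖ := by
  calc ‖f l‖ ^ 2 = ∑ j ∈ range l, (‖f (j + 1)‖ ^ 2 - ‖f j‖ ^ 2) := by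
        rw [sum_range_sub (fun j => ‖f j‖ ^ 2), hf0, norm_zero]; ring
    _ ≤ ∑ j ∈ range l, (‖f (j + 1)‖ + ‖f j‖) * ‖f (j + 1) - f j‖ := by
        refine sum_le_sum fun j _ => ?_
        rw [sq_sub_sq]
        exact mul_le_mul_of_nonneg_left (norm_sub_norm_le _ _) (by positivity)
    _ ≤ ∑ j ∈ range n, (‖f (j + 1)‖ + ‖f j‖) * ‖f (j + 1) - f j‖ :=
        sum_le_sum_of_subset_of_nonneg (range_subset_range.mpr hl) fun _ _ _ => by positivity

theorem norm_sq_le_two_mul_sqrt_mul_sqrt (hf0 : f 0 = 0) {l n : ℕ} (hl : l ≤ n) :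
    ‖f l‖ ^ 2 ≤
      2 * √(∑ i ∈ range (n + 1), ‖f i‖ ^ 2) * √(∑ j ∈ range n, ‖f (j + 1) - f j‖ ^ 2) := by
  calc ‖f l‖ ^ 2 ≤ ∑ j ∈ range n, (‖f (j + 1)‖ + ‖f j‖) * ‖f (j + 1) - f j‖ :=
        norm_sq_le_sum_mul_norm_sub hf0 hl
    _ ≤ √(∑ j ∈ range n, (‖f (j + 1)‖ + ‖f j‖) ^ 2) * √(∑ j ∈ range n, ‖f (j + 1) - f j‖ ^ 2) :=
        Real.sum_mul_le_sqrt_mul_sqrt _ _ _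
    _ ≤ √(4 * ∑ i ∈ range (n + 1), ‖f i‖ ^ 2) * √(∑ j ∈ range n, ‖f (j + 1) - f j‖ ^ 2) := by
        gcongr
        exact sum_range_add_shift_sq_le (fun i => ‖f i‖) n
    _ = 2 * √(∑ i ∈ range (n + 1), ‖f i‖ ^ 2) * √(∑ j ∈ range n, ‖f (j + 1) - f j‖ ^ 2) := by
        rw [Real.sqrt_mul (by norm_num), show (4 : ℝ) = 2 ^ 2 by norm_num, Real.sqrt_sq (by norm_num)]

theorem sum_range_norm_pow_four_le (hf0 : f 0 = 0) (n : ℕ) :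
    ∑ l ∈ range (n + 1), ‖f l‖ ^ 4 ≤
      2 * (∑ l ∈ range (n + 1), ‖f l‖ ^ 2) ^ ((3 : ℝ) / 2)
        * (∑ j ∈ range n, ‖f (j + 1) - f j‖ ^ 2) ^ ((1 : ℝ) / 2) := by
  set S := ∑ l ∈ range (n + 1), ‖f l‖ ^ 2
  set D := ∑ j ∈ range n, ‖f (j + 1) - f j‖ ^ 2
  have hS : 0 ≤ S := sum_nonneg fun _ _ => by positivity
  calc ∑ l ∈ range (n + 1), ‖f l‖ ^ 4 = ∑ l ∈ range (n + 1), ‖f l‖ ^ 2 * ‖f l‖ ^ 2 := by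
        simp only [← pow_add]
    _ ≤ ∑ l ∈ range (n + 1), 2 * √S * √D * ‖f l‖ ^ 2 := by
        gcongr with l hl
        exact norm_sq_le_two_mul_sqrt_mul_sqrt hf0 (Nat.lt_succ_iff.mp (mem_range.mp hl))
    _ = 2 * S ^ ((3 : ℝ) / 2) * D ^ ((1 : ℝ) / 2) := by
        rw [← mul_sum, ← Real.sqrt_eq_rpow, show (3 : ℝ) / 2 = 1 + 1 / 2 by norm_num,
          Real.rpow_add' hS (by norm_num), Real.rpow_one, ← Real.sqrt_eq_rpow]
        ring

theorem discrete_L4_interpolation_general (N : ℕ) (h : ℝ) (hh : h = 1 / (N + 1))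
    (f : ℕ → ℂ) (hf0 : f 0 = 0) :
    ∑ l ∈ Finset.range (N + 2), ‖f l‖ ^ 4 * h ≤
      2 * (∑ l ∈ Finset.range (N + 2), ‖f l‖ ^ 2 * h) ^ ((3 : ℝ) / 2)
        * (∑ l ∈ Finset.range (N + 1),
            ‖(f (l + 1) - f l) / h‖ ^ 2 * h) ^ ((1 : ℝ) / 2) := by
  have hpos : 0 < h := by rw [hh]; positivity
  have h_diff : ∑ l ∈ range (N + 1), ‖(f (l + 1) - f l) / h‖ ^ 2 * h
      = (∑ l ∈ range (N + 1), ‖f (l + 1) - f l‖ ^ 2) / h := by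
    rw [sum_div]
    refine sum_congr rfl fun l _ => ?_
    rw [norm_div, Complex.norm_real, Real.norm_of_nonneg hpos.le]
    field_simp
  have h_half : h ^ ((3 : ℝ) / 2) = h * h ^ ((1 : ℝ) / 2) := by
    rw [show (3 : ℝ) / 2 = 1 + 1 / 2 by norm_num, Real.rpow_add hpos, Real.rpow_one]
  rw [← sum_mul, ← sum_mul, h_diff, Real.mul_rpow (sum_nonneg fun _ _ => by positivity) hpos.le,
    Real.div_rpow (sum_nonneg fun _ _ => by positivity) hpos.le, h_half]
  refine (mul_le_mul_of_nonneg_right (sum_range_norm_pow_four_le hf0 (N + 1)) hpos.le).trans_eq ?_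
  field_simp

/-- Discrete L⁴-interpolation inequality: for a grid function `f` on
`{0,1,…,N+1}` with homogeneous Dirichlet boundary conditions, with step size
`h = 1/(N+1)`, one has `‖f‖_{l⁴_h}⁴ ≤ 2 ‖f‖_h³ ‖δ₊f‖_h`. -/
theorem discrete_L4_interpolation (N : ℕ) (h : ℝ) (hh : h = 1 / (N + 1))
    (f : ℕ → ℂ) (hf0 : f 0 = 0) (hfN : f (N + 1) = 0) :
    ∑ l ∈ Finset.range (N + 2), ‖f l‖ ^ 4 * h ≤
      2 * (∑ l ∈ Finset.range (N + 2), ‖f l‖ ^ 2 * h) ^ ((3 : ℝ) / 2)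
        * (∑ l ∈ Finset.range (N + 1),
            ‖(f (l + 1) - f l) / h‖ ^ 2 * h) ^ ((1 : ℝ) / 2) :=
  discrete_L4_interpolation_general N h hh f hf0
end

section
/- Let N ∈ ℕ, h = 1/(N+1), λ ∈ {−1, 1}, and let f : {0,1,…,N+1} → ℂ be a grid function with f(0) = f(N+1) = 0. Then the discrete energy functional U^h(f) := (1/2)‖δ₊f‖_h² − (λ/4)‖f‖_{l⁴_h}⁴ satisfies the two-sided bound (1/4)‖δ₊f‖_h² − (1/4)‖f‖_h⁶ ≤ U^h(f) ≤ (3/4)‖δ₊f‖_h² + (1/4)‖f‖_h⁶. -/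
/-!
Since `f 0 = 0`, telescoping `‖f m‖² = ∑ (‖f (l+1)‖² - ‖f l‖²)` and Cauchy–Schwarz give the discrete
Agmon inequality `‖f‖_∞⁴ ≤ 4 ‖f‖² ‖δ₊f‖²`. Together with `‖f‖_{l⁴}⁴ ≤ ‖f‖_∞² ‖f‖²` this yields
`‖f‖_{l⁴_h}⁸ ≤ 4 ‖f‖_h⁶ ‖δ₊f‖_h²` (the powers of `h` cancel), hence
`‖f‖_{l⁴_h}⁴ ≤ ‖f‖_h⁶ + ‖δ₊f‖_h²` by AM–GM, and both bounds follow for `λ = ±1`.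
-/

open Finset

section GridFunction

variable {E : Type*} [SeminormedAddCommGroup E] (f : ℕ → E)

theorem sq_norm_le_sum_norm_add_mul_norm_sub (hf0 : f 0 = 0) (m : ℕ) :
    ‖f m‖ ^ 2 ≤ ∑ l ∈ range m, (‖f (l + 1)‖ + ‖f l‖) * ‖f (l + 1) - f l‖ := by
  have htele : ‖f m‖ ^ 2 = ∑ l ∈ range m, (‖f (l + 1)‖ ^ 2 - ‖f l‖ ^ 2) := by
    rw [sum_range_sub (fun l => ‖f l‖ ^ 2), hf0, norm_zero]; ring
  rw [htele]
  refine sum_le_sum fun l _ => ?_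
  have hdiff : ‖f (l + 1)‖ - ‖f l‖ ≤ ‖f (l + 1) - f l‖ := norm_sub_norm_le _ _
  nlinarith [norm_nonneg (f (l + 1)), norm_nonneg (f l)]

theorem sum_sq_norm_add_norm_le (n : ℕ) :
    ∑ l ∈ range n, (‖f (l + 1)‖ + ‖f l‖) ^ 2 ≤ 4 * ∑ l ∈ range (n + 1), ‖f l‖ ^ 2 := by
  have hshift : ∑ l ∈ range n, ‖f (l + 1)‖ ^ 2 ≤ ∑ l ∈ range (n + 1), ‖f l‖ ^ 2 := by
    rw [sum_range_succ' (fun l => ‖f l‖ ^ 2)]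
    exact le_add_of_nonneg_right (sq_nonneg _)
  have htrunc : ∑ l ∈ range n, ‖f l‖ ^ 2 ≤ ∑ l ∈ range (n + 1), ‖f l‖ ^ 2 := by
    rw [sum_range_succ]
    exact le_add_of_nonneg_right (sq_nonneg _)
  have hpoint : ∑ l ∈ range n, (‖f (l + 1)‖ + ‖f l‖) ^ 2
      ≤ ∑ l ∈ range n, (2 * ‖f (l + 1)‖ ^ 2 + 2 * ‖f l‖ ^ 2) :=
    sum_le_sum fun l _ => by nlinarith [sq_nonneg (‖f (l + 1)‖ - ‖f l‖)]
  rw [sum_add_distrib, ← mul_sum, ← mul_sum] at hpoint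
  linarith

theorem sq_sq_norm_le_four_mul_sum (hf0 : f 0 = 0) {n m : ℕ} (hm : m ≤ n) :
    (‖f m‖ ^ 2) ^ 2 ≤ 4 * (∑ l ∈ range (n + 1), ‖f l‖ ^ 2) *
      ∑ l ∈ range n, ‖f (l + 1) - f l‖ ^ 2 := by
  have hextend : ‖f m‖ ^ 2 ≤ ∑ l ∈ range n, (‖f (l + 1)‖ + ‖f l‖) * ‖f (l + 1) - f l‖ :=
    (sq_norm_le_sum_norm_add_mul_norm_sub f hf0 m).trans <|
      sum_le_sum_of_subset_of_nonneg (range_subset_range.mpr hm) fun _ _ _ => by positivity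
  calc (‖f m‖ ^ 2) ^ 2
      ≤ (∑ l ∈ range n, (‖f (l + 1)‖ + ‖f l‖) * ‖f (l + 1) - f l‖) ^ 2 :=
        pow_le_pow_left₀ (sq_nonneg _) hextend 2
    _ ≤ (∑ l ∈ range n, (‖f (l + 1)‖ + ‖f l‖) ^ 2) * ∑ l ∈ range n, ‖f (l + 1) - f l‖ ^ 2 :=
        sum_mul_sq_le_sq_mul_sq _ _ _
    _ ≤ _ := mul_le_mul_of_nonneg_right (sum_sq_norm_add_norm_le f n)
        (sum_nonneg fun _ _ => sq_nonneg _)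

theorem sq_sum_norm_pow_four_le (hf0 : f 0 = 0) (n : ℕ) :
    (∑ l ∈ range (n + 1), ‖f l‖ ^ 4) ^ 2 ≤ 4 * (∑ l ∈ range (n + 1), ‖f l‖ ^ 2) ^ 3 *
      ∑ l ∈ range n, ‖f (l + 1) - f l‖ ^ 2 := by
  obtain ⟨m, hm, hmax⟩ := exists_max_image (range (n + 1)) (fun l => ‖f l‖) nonempty_range_add_one
  set B := ∑ l ∈ range (n + 1), ‖f l‖ ^ 2
  have hB : 0 ≤ B := sum_nonneg fun _ _ => sq_nonneg _
  have hl4 : ∑ l ∈ range (n + 1), ‖f l‖ ^ 4 ≤ ‖f m‖ ^ 2 * B := by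
    rw [mul_sum]
    refine sum_le_sum fun l hl => ?_
    rw [show ‖f l‖ ^ 4 = ‖f l‖ ^ 2 * ‖f l‖ ^ 2 by ring]
    gcongr
    exact hmax l hl
  have hagmon := sq_sq_norm_le_four_mul_sum f hf0 (Nat.lt_succ_iff.mp (mem_range.mp hm))
  calc (∑ l ∈ range (n + 1), ‖f l‖ ^ 4) ^ 2
      ≤ (‖f m‖ ^ 2 * B) ^ 2 := pow_le_pow_left₀ (sum_nonneg fun _ _ => by positivity) hl4 2
    _ = (‖f m‖ ^ 2) ^ 2 * B ^ 2 := by ring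
    _ ≤ _ := by nlinarith [mul_le_mul_of_nonneg_right hagmon (sq_nonneg B)]

end GridFunction

theorem le_add_of_sq_le_four_mul {q a d : ℝ} (ha : 0 ≤ a) (hd : 0 ≤ d) (hq : q ^ 2 ≤ 4 * a * d) :
    q ≤ a + d :=
  abs_le_of_sq_le_sq' (by nlinarith [sq_nonneg (a - d)]) (add_nonneg ha hd) |>.2

theorem discrete_energy_two_sided_bound_general (N : ℕ) (h : ℝ) (hh : h = 1 / (N + 1))
    (lam : ℝ) (hlam : lam = 1 ∨ lam = -1)
    (f : ℕ → ℂ) (hf0 : f 0 = 0) :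
    (1 / 4) * (∑ l ∈ Finset.range (N + 1),
        ‖(f (l + 1) - f l) / h‖ ^ 2 * h)
      - (1 / 4) * Real.sqrt (∑ l ∈ Finset.range (N + 2),
          ‖f l‖ ^ 2 * h) ^ 6
    ≤ (1 / 2) * (∑ l ∈ Finset.range (N + 1),
        ‖(f (l + 1) - f l) / h‖ ^ 2 * h)
      - (lam / 4) * (∑ l ∈ Finset.range (N + 2), ‖f l‖ ^ 4 * h)
    ∧ (1 / 2) * (∑ l ∈ Finset.range (N + 1),
        ‖(f (l + 1) - f l) / h‖ ^ 2 * h)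
      - (lam / 4) * (∑ l ∈ Finset.range (N + 2), ‖f l‖ ^ 4 * h)
    ≤ (3 / 4) * (∑ l ∈ Finset.range (N + 1),
        ‖(f (l + 1) - f l) / h‖ ^ 2 * h)
      + (1 / 4) * Real.sqrt (∑ l ∈ Finset.range (N + 2),
          ‖f l‖ ^ 2 * h) ^ 6 := by
  have hpos : 0 < h := by rw [hh]; positivity
  have hD : ∑ l ∈ range (N + 1), ‖(f (l + 1) - f l) / h‖ ^ 2 * h
      = (∑ l ∈ range (N + 1), ‖f (l + 1) - f l‖ ^ 2) / h := by
    rw [sum_div]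
    refine sum_congr rfl fun l _ => ?_
    rw [norm_div, Complex.norm_real, Real.norm_of_nonneg hpos.le]
    field_simp
  have hA : Real.sqrt (∑ l ∈ range (N + 2), ‖f l‖ ^ 2 * h) ^ 6
      = ((∑ l ∈ range (N + 2), ‖f l‖ ^ 2) * h) ^ 3 := by
    rw [show 6 = 2 * 3 by rfl, pow_mul, Real.sq_sqrt (sum_nonneg fun _ _ => by positivity),
      sum_mul]
  rw [hD, hA, ← sum_mul]
  set D := ∑ l ∈ range (N + 1), ‖f (l + 1) - f l‖ ^ 2
  set B := ∑ l ∈ range (N + 2), ‖f l‖ ^ 2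
  set Q := ∑ l ∈ range (N + 2), ‖f l‖ ^ 4
  have hQ : 0 ≤ Q * h := mul_nonneg (sum_nonneg fun _ _ => by positivity) hpos.le
  have hDh : 0 ≤ D / h := div_nonneg (sum_nonneg fun _ _ => sq_nonneg _) hpos.le
  have hBh : 0 ≤ (B * h) ^ 3 :=
    pow_nonneg (mul_nonneg (sum_nonneg fun _ _ => by positivity) hpos.le) 3
  have hquartic : Q * h ≤ (B * h) ^ 3 + D / h := by
    refine le_add_of_sq_le_four_mul hBh hDh ?_
    calc (Q * h) ^ 2 = Q ^ 2 * h ^ 2 := by ring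
      _ ≤ 4 * B ^ 3 * D * h ^ 2 :=
        mul_le_mul_of_nonneg_right (sq_sum_norm_pow_four_le f hf0 (N + 1)) (sq_nonneg h)
      _ = 4 * (B * h) ^ 3 * (D / h) := by field_simp
  rcases hlam with rfl | rfl <;> constructor <;> linarith

/-- Two-sided bound for the discrete energy functional
`U^h(f) = (1/2)‖δ₊f‖_h² − (λ/4)‖f‖_{l⁴_h}⁴` of a grid function with
homogeneous Dirichlet boundary conditions:
`(1/4)‖δ₊f‖_h² − (1/4)‖f‖_h⁶ ≤ U^h(f) ≤ (3/4)‖δ₊f‖_h² + (1/4)‖f‖_h⁶`. -/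
theorem discrete_energy_two_sided_bound (N : ℕ) (h : ℝ) (hh : h = 1 / (N + 1))
    (lam : ℝ) (hlam : lam = 1 ∨ lam = -1)
    (f : ℕ → ℂ) (hf0 : f 0 = 0) (hfN : f (N + 1) = 0) :
    (1 / 4) * (∑ l ∈ Finset.range (N + 1),
        ‖(f (l + 1) - f l) / h‖ ^ 2 * h)
      - (1 / 4) * Real.sqrt (∑ l ∈ Finset.range (N + 2),
          ‖f l‖ ^ 2 * h) ^ 6
    ≤ (1 / 2) * (∑ l ∈ Finset.range (N + 1),
        ‖(f (l + 1) - f l) / h‖ ^ 2 * h)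
      - (lam / 4) * (∑ l ∈ Finset.range (N + 2), ‖f l‖ ^ 4 * h)
    ∧ (1 / 2) * (∑ l ∈ Finset.range (N + 1),
        ‖(f (l + 1) - f l) / h‖ ^ 2 * h)
      - (lam / 4) * (∑ l ∈ Finset.range (N + 2), ‖f l‖ ^ 4 * h)
    ≤ (3 / 4) * (∑ l ∈ Finset.range (N + 1),
        ‖(f (l + 1) - f l) / h‖ ^ 2 * h)
      + (1 / 4) * Real.sqrt (∑ l ∈ Finset.range (N + 2),
          ‖f l‖ ^ 2 * h) ^ 6 :=
  discrete_energy_two_sided_bound_general N h hh lam hlam f hf0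
end

section
/- Let N ∈ ℕ, h = 1/(N+1), and let u : {0,1,…,N+1} → ℂ be a grid function with u(0) = u(N+1) = 0. With w(l) := |u(l)|² u(l), the following discrete symmetry identity holds: ∑_{l=0}^{N} Re[ conj(δ₊u(l)) · i · δ₊w(l) ] h + ∑_{l=1}^{N} Re[ conj(δ₊δ₋u(l)) · i · w(l) ] h = 0. (This is the vanishing of the nonlinear energy-drift terms U_a + U_d for the central difference scheme under homogeneous Dirichlet boundary conditions.) -/
/-! Summation by parts: after the factor `h` is absorbed, the two sums are the real parts of
`i / h` times the two sides of the discrete Green identity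
`∑ conj(δ₊u) δ₊w + ∑ conj(δ₊δ₋u) w = conj(δ₊u(N)) w(N+1) - conj(δ₊u(0)) w(0)`,
whose boundary terms vanish because `w` inherits the Dirichlet condition from `u`. -/

open ComplexConjugate

theorem sum_sub_mul_sub_add_sum_secondDiff_mul {R : Type*} [CommRing R] (f g : ℕ → R) (n : ℕ) :
    ∑ l ∈ Finset.range (n + 1), (f (l + 1) - f l) * (g (l + 1) - g l)
      + ∑ l ∈ Finset.Icc 1 n, (f (l + 1) - 2 * f l + f (l - 1)) * g l
      = (f (n + 1) - f n) * g (n + 1) - (f 1 - f 0) * g 0 := by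
  induction n with
  | zero => simp; ring
  | succ n ih =>
    rw [Finset.sum_range_succ, Finset.sum_Icc_succ_top (by omega), Nat.add_sub_cancel]
    linear_combination ih

lemma re_div_ofReal_sq_mul (z : ℂ) (h : ℝ) : (z / (h : ℂ) ^ 2).re * h = z.re / h := by
  rw [← Complex.ofReal_pow, Complex.div_ofReal_re]
  rcases eq_or_ne h 0 with rfl | hh
  · simp
  · field_simp

lemma re_conj_div_mul_I_mul_div_mul (a b : ℂ) (h : ℝ) :
    (conj (a / h) * Complex.I * (b / h)).re * h = (Complex.I * (conj a * b)).re / h := by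
  rw [← re_div_ofReal_sq_mul, map_div₀, Complex.conj_ofReal]
  ring_nf

lemma re_conj_div_sq_mul_I_mul_mul (a b : ℂ) (h : ℝ) :
    (conj (a / (h : ℂ) ^ 2) * Complex.I * b).re * h = (Complex.I * (conj a * b)).re / h := by
  rw [← re_div_ofReal_sq_mul, map_div₀, map_pow, Complex.conj_ofReal]
  ring_nf

theorem discrete_energy_drift_vanishes_general (N : ℕ) (h : ℝ)
    (u : ℕ → ℂ) (hu0 : u 0 = 0) (huN : u (N + 1) = 0)
    (w : ℕ → ℂ) (hw : ∀ l, w l = (‖u l‖ : ℂ) ^ 2 * u l) :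
    ∑ l ∈ Finset.range (N + 1),
        ((starRingEnd ℂ) ((u (l + 1) - u l) / (h : ℂ)) * Complex.I
          * ((w (l + 1) - w l) / (h : ℂ))).re * h
      + ∑ l ∈ Finset.Icc 1 N,
          ((starRingEnd ℂ) ((u (l + 1) - 2 * u l + u (l - 1)) / (h : ℂ) ^ 2) * Complex.I
            * w l).re * h
      = 0 := by
  have hw0 : w 0 = 0 := by rw [hw, hu0]; ring
  have hwN : w (N + 1) = 0 := by rw [hw, huN]; ring
  have green := sum_sub_mul_sub_add_sum_secondDiff_mul (conj ∘ u) w N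
  simp only [Function.comp_apply, hw0, hwN, mul_zero, sub_zero] at green
  simp only [re_conj_div_mul_I_mul_div_mul, re_conj_div_sq_mul_I_mul_mul, map_sub, map_add,
    map_mul, map_ofNat]
  rw [← Finset.sum_div, ← Finset.sum_div, ← add_div, ← Complex.re_sum, ← Complex.re_sum,
    ← Complex.add_re, ← Finset.mul_sum, ← Finset.mul_sum, ← mul_add, green]
  simp

/-- Vanishing of the nonlinear energy-drift terms `U_a + U_d` for the central
difference scheme under homogeneous Dirichlet boundary conditions: with
`w(l) = |u(l)|² u(l)`,
`∑_{l=0}^{N} Re[conj(δ₊u(l)) i δ₊w(l)] h + ∑_{l=1}^{N} Re[conj(δ₊δ₋u(l)) i w(l)] h = 0`. -/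
theorem discrete_energy_drift_vanishes (N : ℕ) (h : ℝ) (hh : h = 1 / (N + 1))
    (u : ℕ → ℂ) (hu0 : u 0 = 0) (huN : u (N + 1) = 0)
    (w : ℕ → ℂ) (hw : ∀ l, w l = (‖u l‖ : ℂ) ^ 2 * u l) :
    ∑ l ∈ Finset.range (N + 1),
        ((starRingEnd ℂ) ((u (l + 1) - u l) / (h : ℂ)) * Complex.I
          * ((w (l + 1) - w l) / (h : ℂ))).re * h
      + ∑ l ∈ Finset.Icc 1 N,
          ((starRingEnd ℂ) ((u (l + 1) - 2 * u l + u (l - 1)) / (h : ℂ) ^ 2) * Complex.I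
            * w l).re * h
      = 0 :=
  discrete_energy_drift_vanishes_general N h u hu0 huN w hw
end

section
/- Let f : ℝ → ℂ be continuously differentiable on [0,1] with f(0) = f(1) = 0. Then the Gagliardo–Nirenberg inequality holds: ‖f‖_{L∞}² ≤ 2 ‖f‖_{L²} ‖f'‖_{L²}, i.e. sup_{x ∈ [0,1]} |f(x)|² ≤ 2 (∫₀¹ |f(x)|² dx)^{1/2} (∫₀¹ |f'(x)|² dx)^{1/2}. -/
/-!
Since `f 0 = 0`, the fundamental theorem of calculus gives
`‖f x‖² = ∫₀ˣ 2 ⟪f, f'⟫ ≤ 2 ∫₀¹ ‖f‖ ‖f'‖`, and Cauchy–Schwarz bounds the last integral by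
`‖f‖_{L²} ‖f'‖_{L²}`.
-/

open intervalIntegral

open MeasureTheory Set

theorem integral_norm_mul_norm_le_sqrt_mul_sqrt {α E : Type*} [MeasurableSpace α] {μ : Measure α}
    [NormedAddCommGroup E] {f g : α → E} (hf : MemLp f 2 μ) (hg : MemLp g 2 μ) :
    ∫ a, ‖f a‖ * ‖g a‖ ∂μ ≤ √(∫ a, ‖f a‖ ^ 2 ∂μ) * √(∫ a, ‖g a‖ ^ 2 ∂μ) := by
  have h2 : ENNReal.ofReal 2 = 2 := by norm_num
  have := integral_mul_norm_le_Lp_mul_Lq Real.HolderConjugate.two_two (h2 ▸ hf) (h2 ▸ hg)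
  simpa only [Real.rpow_two, Real.sqrt_eq_rpow, one_div] using this

theorem ContinuousOn.memLp_two_restrict_Ioc {E : Type*} [NormedAddCommGroup E] {f : ℝ → E}
    {a b : ℝ} (hf : ContinuousOn f (Icc a b)) : MemLp f 2 (volume.restrict (Ioc a b)) := by
  have hf' := hf.mono Ioc_subset_Icc_self
  refine (memLp_two_iff_integrable_sq_norm (hf'.aestronglyMeasurable measurableSet_Ioc)).2 ?_
  exact ((hf.norm.pow 2).integrableOn_Icc).mono_set Ioc_subset_Icc_self

theorem intervalIntegral.integral_norm_mul_norm_le_sqrt_mul_sqrt {E : Type*}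
    [NormedAddCommGroup E] {f g : ℝ → E} {a b : ℝ} (hab : a ≤ b)
    (hf : ContinuousOn f (Icc a b)) (hg : ContinuousOn g (Icc a b)) :
    ∫ t in a..b, ‖f t‖ * ‖g t‖ ≤ √(∫ t in a..b, ‖f t‖ ^ 2) * √(∫ t in a..b, ‖g t‖ ^ 2) := by
  simp only [integral_of_le hab]
  exact _root_.integral_norm_mul_norm_le_sqrt_mul_sqrt hf.memLp_two_restrict_Ioc
    hg.memLp_two_restrict_Ioc

theorem norm_sq_le_two_integral_norm_mul_norm_deriv {E : Type*} [NormedAddCommGroup E]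
    [InnerProductSpace ℝ E] {f f' : ℝ → E} {a x : ℝ} (hax : a ≤ x)
    (hderiv : ∀ t ∈ Icc a x, HasDerivWithinAt f (f' t) (Icc a x) t)
    (hcont : ContinuousOn f' (Icc a x)) (hfa : f a = 0) :
    ‖f x‖ ^ 2 ≤ 2 * ∫ t in a..x, ‖f t‖ * ‖f' t‖ := by
  have hf : ContinuousOn f (Icc a x) := fun t ht => (hderiv t ht).continuousWithinAt
  have hinner : ContinuousOn (fun t => 2 * inner ℝ (f t) (f' t)) (Icc a x) :=
    continuousOn_const.mul (hf.inner hcont)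
  have hftc : ∫ t in a..x, 2 * inner ℝ (f t) (f' t) = ‖f x‖ ^ 2 := by
    rw [integral_eq_sub_of_hasDerivAt_of_le (f := fun t => ‖f t‖ ^ 2) hax (hf.norm.pow 2)
      (fun t ht => ((hderiv t (Ioo_subset_Icc_self ht)).norm_sq).hasDerivAt
        (Icc_mem_nhds ht.1 ht.2))
      (hinner.intervalIntegrable_of_Icc hax), hfa, norm_zero]
    ring
  rw [← hftc, ← intervalIntegral.integral_const_mul]
  refine integral_mono_on hax (hinner.intervalIntegrable_of_Icc hax)
    ((continuousOn_const.mul (hf.norm.mul hcont.norm)).intervalIntegrable_of_Icc hax)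
    fun t _ => ?_
  have := real_inner_le_norm (f t) (f' t)
  linarith

theorem gagliardo_nirenberg_general (f f' : ℝ → ℂ)
    (hderiv : ∀ x ∈ Set.Icc (0 : ℝ) 1, HasDerivWithinAt f (f' x) (Set.Icc 0 1) x)
    (hcont : ContinuousOn f' (Set.Icc 0 1))
    (hf0 : f 0 = 0) :
    ∀ x ∈ Set.Icc (0 : ℝ) 1, ‖f x‖ ^ 2 ≤
      2 * Real.sqrt (∫ x in (0 : ℝ)..1, ‖f x‖ ^ 2)
        * Real.sqrt (∫ x in (0 : ℝ)..1, ‖f' x‖ ^ 2) := by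
  rintro x ⟨hx0, hx1⟩
  have hsub : Icc 0 x ⊆ Icc (0 : ℝ) 1 := Icc_subset_Icc_right hx1
  have hf : ContinuousOn f (Icc 0 1) := fun t ht => (hderiv t ht).continuousWithinAt
  calc ‖f x‖ ^ 2 ≤ 2 * ∫ t in 0..x, ‖f t‖ * ‖f' t‖ :=
        norm_sq_le_two_integral_norm_mul_norm_deriv hx0
          (fun t ht => (hderiv t (hsub ht)).mono hsub) (hcont.mono hsub) hf0
    _ ≤ 2 * ∫ t in 0..1, ‖f t‖ * ‖f' t‖ := by
        gcongr
        exact integral_mono_interval le_rfl hx0 hx1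
          (ae_of_all _ fun t => by positivity)
          ((hf.norm.mul hcont.norm).intervalIntegrable_of_Icc zero_le_one)
    _ ≤ 2 * (√(∫ t in 0..1, ‖f t‖ ^ 2) * √(∫ t in 0..1, ‖f' t‖ ^ 2)) := by
        gcongr
        exact integral_norm_mul_norm_le_sqrt_mul_sqrt zero_le_one hf hcont
    _ = _ := by ring

/-- Gagliardo–Nirenberg inequality on `[0,1]`: if `f` is continuously
differentiable on `[0,1]` (with derivative `f'`) and `f 0 = f 1 = 0`, then
`sup_{x ∈ [0,1]} |f x|² ≤ 2 (∫₀¹ |f|²)^{1/2} (∫₀¹ |f'|²)^{1/2}`. -/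
theorem gagliardo_nirenberg (f f' : ℝ → ℂ)
    (hderiv : ∀ x ∈ Set.Icc (0 : ℝ) 1, HasDerivWithinAt f (f' x) (Set.Icc 0 1) x)
    (hcont : ContinuousOn f' (Set.Icc 0 1))
    (hf0 : f 0 = 0) (hf1 : f 1 = 0) :
    ∀ x ∈ Set.Icc (0 : ℝ) 1, ‖f x‖ ^ 2 ≤
      2 * Real.sqrt (∫ x in (0 : ℝ)..1, ‖f x‖ ^ 2)
        * Real.sqrt (∫ x in (0 : ℝ)..1, ‖f' x‖ ^ 2) :=
  gagliardo_nirenberg_general f f' hderiv hcont hf0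
end

section
/- Let f : ℝ → ℂ be continuously differentiable on [0,1] with f(0) = f(1) = 0. Then the L⁴-interpolation inequality holds: ‖f‖_{L⁴}⁴ ≤ 2 ‖f‖_{L²}³ ‖f'‖_{L²}, i.e. ∫₀¹ |f(x)|⁴ dx ≤ 2 (∫₀¹ |f(x)|² dx)^{3/2} (∫₀¹ |f'(x)|² dx)^{1/2}. -/
/-!
Since `f 0 = 0`, the fundamental theorem of calculus applied to `‖f‖²`, whose derivative is
`2 ⟪f, f'⟫`, gives the uniform bound `‖f x‖² ≤ 2 ∫₀¹ ‖f‖ ‖f'‖` on `[0,1]`. Hence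
`∫ ‖f‖⁴ ≤ (sup ‖f‖²) ∫ ‖f‖² ≤ 2 (∫ ‖f‖ ‖f'‖) ∫ ‖f‖²`, and Cauchy–Schwarz bounds
`∫ ‖f‖ ‖f'‖` by `(∫ ‖f‖²)^{1/2} (∫ ‖f'‖²)^{1/2}`.
-/

open intervalIntegral Set

open scoped RealInnerProductSpace

theorem intervalIntegral_mul_le_sqrt_mul_sqrt {g h : ℝ → ℝ} {a b : ℝ} (hab : a ≤ b)
    (hg : ContinuousOn g (Icc a b)) (hh : ContinuousOn h (Icc a b))
    (hg0 : ∀ x, 0 ≤ g x) (hh0 : ∀ x, 0 ≤ h x) :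
    ∫ x in a..b, g x * h x ≤
      (∫ x in a..b, g x ^ 2) ^ ((1 : ℝ) / 2) * (∫ x in a..b, h x ^ 2) ^ ((1 : ℝ) / 2) := by
  have memLp_two {u : ℝ → ℝ} (hu : ContinuousOn u (Icc a b)) :
      MeasureTheory.MemLp u (ENNReal.ofReal 2) (MeasureTheory.volume.restrict (Ioc a b)) := by
    have hmeas := (hu.mono Ioc_subset_Icc_self).aestronglyMeasurable (μ := MeasureTheory.volume)
      measurableSet_Ioc
    rw [ENNReal.ofReal_ofNat, MeasureTheory.memLp_two_iff_integrable_sq hmeas]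
    exact ((hu.pow 2).integrableOn_Icc).mono_set Ioc_subset_Icc_self
  simpa only [integral_of_le hab, Real.rpow_two] using
    MeasureTheory.integral_mul_le_Lp_mul_Lq_of_nonneg Real.HolderConjugate.two_two
      (.of_forall hg0) (.of_forall hh0) (memLp_two hg) (memLp_two hh)

theorem integral_norm_pow_four_le {F : Type*} [NormedAddCommGroup F] {f : ℝ → F} {a b C : ℝ}
    (hab : a ≤ b) (hf : ContinuousOn f (Icc a b)) (hC : ∀ x ∈ Icc a b, ‖f x‖ ^ 2 ≤ C) :
    ∫ x in a..b, ‖f x‖ ^ 4 ≤ C * ∫ x in a..b, ‖f x‖ ^ 2 := by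
  rw [← integral_const_mul]
  refine integral_mono_on hab ((hf.norm.pow 4).intervalIntegrable_of_Icc hab)
    (((hf.norm.pow 2).intervalIntegrable_of_Icc hab).const_mul C) fun x hx => ?_
  calc ‖f x‖ ^ 4 = ‖f x‖ ^ 2 * ‖f x‖ ^ 2 := by ring
    _ ≤ C * ‖f x‖ ^ 2 := by gcongr; exact hC x hx

section

variable {E : Type*} [NormedAddCommGroup E] [InnerProductSpace ℝ E] {f f' : ℝ → E} {a b : ℝ}

theorem sq_norm_le_two_integral_norm_mul_norm_deriv
    (hderiv : ∀ x ∈ Icc a b, HasDerivWithinAt f (f' x) (Icc a b) x)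
    (hcont : ContinuousOn f' (Icc a b)) (hfa : f a = 0) {x : ℝ} (hx : x ∈ Icc a b) :
    ‖f x‖ ^ 2 ≤ 2 * ∫ t in a..b, ‖f t‖ * ‖f' t‖ := by
  have hf : ContinuousOn f (Icc a b) := fun t ht => (hderiv t ht).continuousWithinAt
  have hab : a ≤ b := hx.1.trans hx.2
  have hsub : Icc a x ⊆ Icc a b := Icc_subset_Icc_right hx.2
  have hinner : IntervalIntegrable (fun t => 2 * ⟪f t, f' t⟫) MeasureTheory.volume a x :=
    (continuousOn_const.mul ((hf.inner hcont).mono hsub)).intervalIntegrable_of_Icc hx.1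
  have ftc : ∫ t in a..x, 2 * ⟪f t, f' t⟫ = ‖f x‖ ^ 2 := by
    simpa [hfa] using integral_eq_sub_of_hasDerivAt_of_le hx.1 ((hf.mono hsub).norm.pow 2)
      (fun t ht => (hderiv t (hsub (Ioo_subset_Icc_self ht))).norm_sq.hasDerivAt
        (Icc_mem_nhds ht.1 (ht.2.trans_le hx.2))) hinner
  have hbound : ContinuousOn (fun t => 2 * (‖f t‖ * ‖f' t‖)) (Icc a b) :=
    continuousOn_const.mul (hf.norm.mul hcont.norm)
  calc ‖f x‖ ^ 2 = ∫ t in a..x, 2 * ⟪f t, f' t⟫ := ftc.symm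
    _ ≤ ∫ t in a..x, 2 * (‖f t‖ * ‖f' t‖) :=
      integral_mono_on hx.1 hinner ((hbound.mono hsub).intervalIntegrable_of_Icc hx.1)
        fun t _ => by gcongr; exact real_inner_le_norm _ _
    _ ≤ ∫ t in a..b, 2 * (‖f t‖ * ‖f' t‖) :=
      integral_mono_interval le_rfl hx.1 hx.2 (.of_forall fun t => by positivity)
        (hbound.intervalIntegrable_of_Icc hab)
    _ = 2 * ∫ t in a..b, ‖f t‖ * ‖f' t‖ := integral_const_mul _ _

end

theorem L4_interpolation_general (f f' : ℝ → ℂ)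
    (hderiv : ∀ x ∈ Set.Icc (0 : ℝ) 1, HasDerivWithinAt f (f' x) (Set.Icc 0 1) x)
    (hcont : ContinuousOn f' (Set.Icc 0 1))
    (hf0 : f 0 = 0) :
    (∫ x in (0 : ℝ)..1, ‖f x‖ ^ 4) ≤
      2 * (∫ x in (0 : ℝ)..1, ‖f x‖ ^ 2) ^ ((3 : ℝ) / 2)
        * (∫ x in (0 : ℝ)..1, ‖f' x‖ ^ 2) ^ ((1 : ℝ) / 2) := by
  have hf : ContinuousOn f (Icc 0 1) := fun t ht => (hderiv t ht).continuousWithinAt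
  set A := ∫ x in (0 : ℝ)..1, ‖f x‖ ^ 2
  set B := ∫ x in (0 : ℝ)..1, ‖f' x‖ ^ 2
  have hA : 0 ≤ A := integral_nonneg zero_le_one fun _ _ => by positivity
  calc (∫ x in (0 : ℝ)..1, ‖f x‖ ^ 4)
      ≤ (2 * ∫ t in (0 : ℝ)..1, ‖f t‖ * ‖f' t‖) * A :=
        integral_norm_pow_four_le zero_le_one hf
          fun x hx => sq_norm_le_two_integral_norm_mul_norm_deriv hderiv hcont hf0 hx
    _ ≤ (2 * (A ^ ((1 : ℝ) / 2) * B ^ ((1 : ℝ) / 2))) * A := by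
        gcongr
        exact intervalIntegral_mul_le_sqrt_mul_sqrt zero_le_one hf.norm hcont.norm
          (fun _ => norm_nonneg _) fun _ => norm_nonneg _
    _ = 2 * A ^ ((3 : ℝ) / 2) * B ^ ((1 : ℝ) / 2) := by
        rw [show (3 : ℝ) / 2 = 1 / 2 + 1 by norm_num, Real.rpow_add_one' hA (by norm_num)]
        ring

/-- L⁴-interpolation inequality on `[0,1]`: if `f` is continuously
differentiable on `[0,1]` (with derivative `f'`) and `f 0 = f 1 = 0`, then
`∫₀¹ |f|⁴ ≤ 2 (∫₀¹ |f|²)^{3/2} (∫₀¹ |f'|²)^{1/2}`. -/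
theorem L4_interpolation (f f' : ℝ → ℂ)
    (hderiv : ∀ x ∈ Set.Icc (0 : ℝ) 1, HasDerivWithinAt f (f' x) (Set.Icc 0 1) x)
    (hcont : ContinuousOn f' (Set.Icc 0 1))
    (hf0 : f 0 = 0) (hf1 : f 1 = 0) :
    (∫ x in (0 : ℝ)..1, ‖f x‖ ^ 4) ≤
      2 * (∫ x in (0 : ℝ)..1, ‖f x‖ ^ 2) ^ ((3 : ℝ) / 2)
        * (∫ x in (0 : ℝ)..1, ‖f' x‖ ^ 2) ^ ((1 : ℝ) / 2) :=
  L4_interpolation_general f f' hderiv hcont hf0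
end

section
/- Let λ ∈ {−1, 1}, let u, v : ℝ → ℂ be twice continuously differentiable on [0,1] with u(0) = u(1) = v(0) = v(1) = 0, let F : [0,1] → ℝ be continuous with F(x) ≥ 0 for all x ∈ [0,1], and set w := u − v. Then the one-sided (quasi-monotonicity) estimate for the cubic Schrödinger nonlinearity holds: ∫₀¹ Re[ conj(w(x)) · ( i w''(x) + i λ (|u(x)|² u(x) − |v(x)|² v(x)) − (1/2) F(x) w(x) ) ] dx ≤ ‖u‖_{L∞} ‖v‖_{L∞} ∫₀¹ |w(x)|² dx. -/
/-!
Write `w = u - v`. Integrating by parts, `∫ Re(i w̄ w'') = [Re(i w̄ w')]₀¹ - ∫ Re(i |w'|²) = 0`,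
because `w` vanishes at both ends and `i |w'|²` is purely imaginary. The damping term
`-(1/2) F |w|²` is nonpositive. What remains is the pointwise bound
`|Re(i (ā - b̄)(|a|²a - |b|²b))| = ||a|² - |b|²| |Im(a b̄)| ≤ |a| |b| |a - b|²`.
-/

open intervalIntegral Complex ComplexConjugate

/-- Squared, the gap between the two sides is the perfect square `(2AB - (A + B)c)²`. -/
lemma abs_sub_mul_le_of_sq_add_sq_eq_mul {A B c s t : ℝ} (ht : 0 ≤ t) (ht2 : t ^ 2 = A * B)
    (hcs : s ^ 2 + c ^ 2 = A * B) (hABc : 0 ≤ A + B - 2 * c) :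
    |(A - B) * s| ≤ t * (A + B - 2 * c) := by
  have hgap : (t * (A + B - 2 * c)) ^ 2 - ((A - B) * s) ^ 2 = (2 * A * B - (A + B) * c) ^ 2 := by
    linear_combination (A + B - 2 * c) ^ 2 * ht2 - (A - B) ^ 2 * hcs
  refine abs_le_of_sq_le_sq ?_ (mul_nonneg ht hABc)
  linarith [sq_nonneg (2 * A * B - (A + B) * c)]

lemma abs_re_I_mul_conj_sub_mul_cubic_sub_le (a b : ℂ) :
    |(I * conj (a - b) * (((‖a‖ : ℝ) : ℂ) ^ 2 * a - ((‖b‖ : ℝ) : ℂ) ^ 2 * b)).re|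
      ≤ ‖a‖ * ‖b‖ * ‖a - b‖ ^ 2 := by
  have hA : ((‖a‖ : ℝ) : ℂ) ^ 2 = ((normSq a : ℝ) : ℂ) := by
    rw [← ofReal_pow, Complex.sq_norm]
  have hB : ((‖b‖ : ℝ) : ℂ) ^ 2 = ((normSq b : ℝ) : ℂ) := by
    rw [← ofReal_pow, Complex.sq_norm]
  have hre : (I * conj (a - b) * (((‖a‖ : ℝ) : ℂ) ^ 2 * a - ((‖b‖ : ℝ) : ℂ) ^ 2 * b)).re
      = (normSq a - normSq b) * (a * conj b).im := by
    rw [hA, hB]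
    simp only [normSq_apply, mul_re, mul_im, sub_re, sub_im, I_re, I_im, conj_re, conj_im,
      ofReal_re, ofReal_im]
    ring
  have hsub : ‖a - b‖ ^ 2 = normSq a + normSq b - 2 * (a * conj b).re := by
    simp only [Complex.sq_norm, normSq_apply, mul_re, sub_re, sub_im, conj_re, conj_im]
    ring
  rw [hre, hsub]
  refine abs_sub_mul_le_of_sq_add_sq_eq_mul (by positivity) ?_ ?_ (by rw [← hsub]; positivity)
  · rw [mul_pow, Complex.sq_norm, Complex.sq_norm]
  · rw [← normSq_conj b, ← normSq_mul, normSq_apply]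
    ring

lemma re_conj_sub_mul_cubic_schrodinger_le {lam f : ℝ} (hlam : |lam| ≤ 1) (hf : 0 ≤ f)
    (a b z : ℂ) :
    (conj (a - b) * (I * z + I * (lam : ℂ)
        * (((‖a‖ : ℝ) : ℂ) ^ 2 * a - ((‖b‖ : ℝ) : ℂ) ^ 2 * b)
        - (1 / 2 : ℂ) * (f : ℂ) * (a - b))).re
      ≤ (I * conj (a - b) * z).re + ‖a‖ * ‖b‖ * ‖a - b‖ ^ 2 := by
  set N := ((‖a‖ : ℝ) : ℂ) ^ 2 * a - ((‖b‖ : ℝ) : ℂ) ^ 2 * b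
  have hsplit : (conj (a - b) * (I * z + I * (lam : ℂ) * N - (1 / 2 : ℂ) * (f : ℂ) * (a - b))).re
      = (I * conj (a - b) * z).re + lam * (I * conj (a - b) * N).re
        - (1 / 2) * f * ‖a - b‖ ^ 2 := by
    rw [Complex.sq_norm, normSq_apply]
    simp only [mul_re, mul_im, add_re, add_im, sub_re, sub_im, I_re, I_im, conj_re, conj_im,
      ofReal_re, ofReal_im, div_ofNat_re, div_ofNat_im, one_re, one_im]
    ring
  have hcubic : lam * (I * conj (a - b) * N).re ≤ ‖a‖ * ‖b‖ * ‖a - b‖ ^ 2 :=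
    calc lam * (I * conj (a - b) * N).re
        ≤ |lam| * |(I * conj (a - b) * N).re| := by rw [← abs_mul]; exact le_abs_self _
      _ ≤ 1 * (‖a‖ * ‖b‖ * ‖a - b‖ ^ 2) :=
        mul_le_mul hlam (abs_re_I_mul_conj_sub_mul_cubic_sub_le a b) (abs_nonneg _) zero_le_one
      _ = ‖a‖ * ‖b‖ * ‖a - b‖ ^ 2 := one_mul _
  rw [hsplit]
  linarith [mul_nonneg hf (sq_nonneg ‖a - b‖)]

lemma HasDerivWithinAt.re_I_mul_conj_mul {w w' : ℝ → ℂ} {z' : ℂ} {s : Set ℝ} {x : ℝ}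
    (hw : HasDerivWithinAt w (w' x) s x) (hw' : HasDerivWithinAt w' z' s x) :
    HasDerivWithinAt (fun y ↦ (I * conj (w y) * w' y).re) (I * conj (w x) * z').re s x := by
  have hconj : HasDerivWithinAt (fun y ↦ conj (w y)) (conj (w' x)) s x := by simpa using hw.star
  have hprod := (hconj.const_mul I).mul hw'
  -- `i |w'|²` is purely imaginary, so the term `Re(i w̄' w')` of the product rule drops out.
  have hdrop : (I * conj (w' x) * w' x + I * conj (w x) * z').re = (I * conj (w x) * z').re := by
    simp only [add_re, mul_re, mul_im, I_re, I_im, conj_re, conj_im]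
    ring
  have hre := reCLM.hasFDerivAt.comp_hasDerivWithinAt x hprod
  rw [reCLM_apply, hdrop] at hre
  exact hre

lemma integral_re_I_mul_conj_mul_deriv2_eq_zero {w w' w'' : ℝ → ℂ} {a b : ℝ} (hab : a ≤ b)
    (hw : ∀ x ∈ Set.Icc a b, HasDerivWithinAt w (w' x) (Set.Icc a b) x)
    (hw' : ∀ x ∈ Set.Icc a b, HasDerivWithinAt w' (w'' x) (Set.Icc a b) x)
    (hw''c : ContinuousOn w'' (Set.Icc a b)) (ha : w a = 0) (hb : w b = 0) :
    ∫ x in a..b, (I * conj (w x) * w'' x).re = 0 := by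
  have hflux := fun x hx ↦ (hw x hx).re_I_mul_conj_mul (hw' x hx)
  have hwc : ContinuousOn w (Set.Icc a b) := fun x hx ↦ (hw x hx).continuousWithinAt
  rw [integral_eq_sub_of_hasDeriv_right_of_le hab (fun x hx ↦ (hflux x hx).continuousWithinAt)
    (fun x hx ↦ ((hflux x (Set.Ioo_subset_Icc_self hx)).hasDerivAt
      (Icc_mem_nhds hx.1 hx.2)).hasDerivWithinAt)
    (ContinuousOn.intervalIntegrable_of_Icc hab (by fun_prop))]
  simp [ha, hb]

lemma IsCompact.norm_le_iSup_norm {X E : Type*} [TopologicalSpace X] [SeminormedAddGroup E]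
    {s : Set X} {f : X → E} (hs : IsCompact s) (hf : ContinuousOn f s) {x : X} (hx : x ∈ s) :
    ‖f x‖ ≤ ⨆ y : s, ‖f y‖ :=
  le_ciSup (f := fun y : s ↦ ‖f y‖)
    (by simpa only [Set.image_eq_range] using hs.bddAbove_image hf.norm) ⟨x, hx⟩

/-- One-sided (quasi-monotonicity) estimate for the cubic Schrödinger
nonlinearity: for `u, v` twice continuously differentiable on `[0,1]` with
homogeneous Dirichlet boundary conditions, a continuous nonnegative
`F : [0,1] → ℝ`, and `w = u − v`,
`∫₀¹ Re[conj(w) (i w'' + i λ (|u|²u − |v|²v) − (1/2) F w)] ≤ ‖u‖_∞ ‖v‖_∞ ∫₀¹ |w|²`. -/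
theorem one_sided_cubic_estimate (lam : ℝ) (hlam : lam = 1 ∨ lam = -1)
    (u u' u'' v v' v'' : ℝ → ℂ)
    (hu1 : ∀ x ∈ Set.Icc (0 : ℝ) 1, HasDerivWithinAt u (u' x) (Set.Icc 0 1) x)
    (hu2 : ∀ x ∈ Set.Icc (0 : ℝ) 1, HasDerivWithinAt u' (u'' x) (Set.Icc 0 1) x)
    (hu2c : ContinuousOn u'' (Set.Icc 0 1))
    (hv1 : ∀ x ∈ Set.Icc (0 : ℝ) 1, HasDerivWithinAt v (v' x) (Set.Icc 0 1) x)
    (hv2 : ∀ x ∈ Set.Icc (0 : ℝ) 1, HasDerivWithinAt v' (v'' x) (Set.Icc 0 1) x)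
    (hv2c : ContinuousOn v'' (Set.Icc 0 1))
    (hu0 : u 0 = 0) (hu1b : u 1 = 0) (hv0 : v 0 = 0) (hv1b : v 1 = 0)
    (F : ℝ → ℝ) (hFc : ContinuousOn F (Set.Icc 0 1))
    (hFpos : ∀ x ∈ Set.Icc (0 : ℝ) 1, 0 ≤ F x) :
    (∫ x in (0 : ℝ)..1,
        ((starRingEnd ℂ) (u x - v x)
          * (Complex.I * (u'' x - v'' x)
            + Complex.I * (lam : ℂ)
              * (((‖u x‖ : ℝ) : ℂ) ^ 2 * u x - ((‖v x‖ : ℝ) : ℂ) ^ 2 * v x)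
            - (1 / 2 : ℂ) * (F x : ℂ) * (u x - v x))).re)
      ≤ (⨆ x : Set.Icc (0 : ℝ) 1, ‖u x‖)
        * (⨆ x : Set.Icc (0 : ℝ) 1, ‖v x‖)
        * ∫ x in (0 : ℝ)..1, ‖u x - v x‖ ^ 2 := by
  have h01 : (0 : ℝ) ≤ 1 := zero_le_one
  have hlam_abs : |lam| ≤ 1 := by rcases hlam with rfl | rfl <;> simp
  have huc : ContinuousOn u (Set.Icc 0 1) := fun x hx ↦ (hu1 x hx).continuousWithinAt
  have hvc : ContinuousOn v (Set.Icc 0 1) := fun x hx ↦ (hv1 x hx).continuousWithinAt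
  have hibp : ∫ x in (0 : ℝ)..1, (I * conj (u x - v x) * (u'' x - v'' x)).re = 0 :=
    integral_re_I_mul_conj_mul_deriv2_eq_zero (w' := fun x ↦ u' x - v' x) h01
      (fun x hx ↦ (hu1 x hx).sub (hv1 x hx)) (fun x hx ↦ (hu2 x hx).sub (hv2 x hx))
      (hu2c.sub hv2c) (by simp [hu0, hv0]) (by simp [hu1b, hv1b])
  have hw2int : IntervalIntegrable (fun x ↦ ‖u x - v x‖ ^ 2) MeasureTheory.volume 0 1 :=
    ContinuousOn.intervalIntegrable_of_Icc h01 (by fun_prop)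
  calc _ ≤ ∫ x in (0 : ℝ)..1, (I * conj (u x - v x) * (u'' x - v'' x)).re
          + (⨆ x : Set.Icc (0 : ℝ) 1, ‖u x‖) * (⨆ x : Set.Icc (0 : ℝ) 1, ‖v x‖)
            * ‖u x - v x‖ ^ 2 := by
        refine integral_mono_on h01 (ContinuousOn.intervalIntegrable_of_Icc h01 (by fun_prop))
          (ContinuousOn.intervalIntegrable_of_Icc h01 (by fun_prop)) fun x hx ↦ ?_
        refine (re_conj_sub_mul_cubic_schrodinger_le hlam_abs (hFpos x hx) _ _ _).trans ?_
        gcongr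
        · exact le_trans (norm_nonneg _) (isCompact_Icc.norm_le_iSup_norm huc hx)
        · exact isCompact_Icc.norm_le_iSup_norm huc hx
        · exact isCompact_Icc.norm_le_iSup_norm hvc hx
    _ = _ := by
        rw [integral_add (ContinuousOn.intervalIntegrable_of_Icc h01 (by fun_prop))
          (hw2int.const_mul _), hibp, integral_const_mul, zero_add]
end

section
/- Let N ∈ ℕ, h = 1/(N+1), λ ∈ {−1, 1}, let u, v : {0,1,…,N+1} → ℂ be grid functions with u(0) = u(N+1) = v(0) = v(N+1) = 0, let F : {0,1,…,N+1} → ℝ satisfy F(l) ≥ 0 for all l, and set ε := u − v. Then the discrete one-sided estimate for the cubic Schrödinger nonlinearity holds: ∑_{l=1}^{N} Re[ conj(ε(l)) · ( i δ₊δ₋ε(l) + i λ (|u(l)|² u(l) − |v(l)|² v(l)) − (1/2) F(l) ε(l) ) ] h ≤ ‖u‖_{l∞_h} ‖v‖_{l∞_h} ‖ε‖_h². -/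
/-!
Splitting the real part of the summand, the three terms are handled separately. The Laplacian
term vanishes after summation: by summation by parts (Dirichlet boundary values)
`∑ conj ε · δ₊δ₋ε` is real, and multiplying by `i` makes its real part zero. The damping term
is `-F |ε|² / 2 ≤ 0`. The cubic term reduces pointwise to
`(|u|² - |v|²) · Im (conj u · v) ≤ |u| |v| |u - v|²`, which is the Cauchy–Schwarz inequality for
the vectors `(|u|² - |v|², 2 |u| |v|)` and `(Im (conj u · v), Re (conj u · v))` of lengths
`|u|² + |v|²` and `|u| |v|`, since `|u - v|² = |u|² + |v|² - 2 Re (conj u · v)`.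
-/

open Finset ComplexConjugate

lemma mul_add_mul_le_of_sq_add_sq_eq {x y p q r s : ℝ} (hr : 0 ≤ r) (hs : 0 ≤ s)
    (hxy : x ^ 2 + y ^ 2 = r ^ 2) (hpq : p ^ 2 + q ^ 2 = s ^ 2) : x * p + y * q ≤ r * s := by
  have hsq : (x * p + y * q) ^ 2 + (x * q - y * p) ^ 2 = (r * s) ^ 2 := by
    linear_combination (p ^ 2 + q ^ 2) * hxy + r ^ 2 * hpq
  exact abs_le_of_sq_le_sq' (by nlinarith [sq_nonneg (x * q - y * p)]) (mul_nonneg hr hs) |>.2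

namespace Complex

lemma im_conj_sub_mul_cubic (u v : ℂ) :
    (conj (u - v) * ((‖u‖ : ℂ) ^ 2 * u - (‖v‖ : ℂ) ^ 2 * v)).im
      = (‖u‖ ^ 2 - ‖v‖ ^ 2) * (conj u * v).im := by
  simp only [← ofReal_pow, Complex.sq_norm, map_sub, sub_mul, mul_sub, sub_im, normSq_apply]
  simp only [mul_im, mul_re, conj_re, conj_im, ofReal_re, ofReal_im]
  ring

lemma abs_im_conj_sub_mul_cubic_le (u v : ℂ) :
    |(conj (u - v) * ((‖u‖ : ℂ) ^ 2 * u - (‖v‖ : ℂ) ^ 2 * v)).im|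
      ≤ ‖u‖ * ‖v‖ * ‖u - v‖ ^ 2 := by
  rw [im_conj_sub_mul_cubic]
  set w := conj u * v
  have hw : w.im ^ 2 + w.re ^ 2 = (‖u‖ * ‖v‖) ^ 2 := by
    rw [← norm_conj u, ← norm_mul, Complex.sq_norm, normSq_apply]; ring
  have hx : (‖u‖ ^ 2 - ‖v‖ ^ 2) ^ 2 + (2 * ‖u‖ * ‖v‖) ^ 2 = (‖u‖ ^ 2 + ‖v‖ ^ 2) ^ 2 := by ring
  have hsub : ‖u - v‖ ^ 2 = ‖u‖ ^ 2 + ‖v‖ ^ 2 - 2 * w.re := by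
    simp only [Complex.sq_norm, normSq_sub, w, mul_re, conj_re, conj_im]; ring
  have huv : 0 ≤ ‖u‖ * ‖v‖ := by positivity
  have hr : 0 ≤ ‖u‖ ^ 2 + ‖v‖ ^ 2 := by positivity
  rw [abs_le]
  constructor
  · have := mul_add_mul_le_of_sq_add_sq_eq hr huv hx (p := -w.im) (q := w.re) (by simpa using hw)
    nlinarith
  · have := mul_add_mul_le_of_sq_add_sq_eq hr huv hx hw
    nlinarith

lemma neg_mul_im_conj_sub_mul_cubic_le {lam : ℝ} (hlam : |lam| ≤ 1) (u v : ℂ) :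
    -lam * (conj (u - v) * ((‖u‖ : ℂ) ^ 2 * u - (‖v‖ : ℂ) ^ 2 * v)).im
      ≤ ‖u‖ * ‖v‖ * ‖u - v‖ ^ 2 :=
  calc _ ≤ |lam| * |(conj (u - v) * ((‖u‖ : ℂ) ^ 2 * u - (‖v‖ : ℂ) ^ 2 * v)).im| := by
        rw [neg_mul, ← abs_mul]; exact neg_le_abs _
    _ ≤ 1 * (‖u‖ * ‖v‖ * ‖u - v‖ ^ 2) :=
        mul_le_mul hlam (abs_im_conj_sub_mul_cubic_le u v) (abs_nonneg _) zero_le_one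
    _ = ‖u‖ * ‖v‖ * ‖u - v‖ ^ 2 := one_mul _

lemma re_conj_mul_schrodinger_rhs (z a b : ℂ) (c s t : ℝ) :
    (conj z * (I * (a / (c : ℂ) ^ 2) + I * (s : ℂ) * b - (1 / 2 : ℂ) * (t : ℂ) * z)).re
      = -(conj z * a).im / c ^ 2 + (-s * (conj z * b).im - t / 2 * ‖z‖ ^ 2) := by
  rw [← ofReal_pow, Complex.sq_norm, normSq_apply]
  simp only [mul_re, mul_im, add_re, add_im, sub_re, sub_im, div_ofReal_re, div_ofReal_im,
    conj_re, conj_im, I_re, I_im, ofReal_re, ofReal_im, div_ofNat_re, div_ofNat_im, one_re, one_im]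
  ring

end Complex

lemma im_sum_conj_mul_second_difference_eq_zero (N : ℕ) {ε : ℕ → ℂ}
    (h0 : ε 0 = 0) (hN : ε (N + 1) = 0) :
    (∑ l ∈ Icc 1 N, conj (ε l) * (ε (l + 1) - 2 * ε l + ε (l - 1))).im = 0 := by
  set g : ℕ → ℂ := fun l => conj (ε l) * ε (l + 1)
  have hterm : ∀ k, conj (ε (1 + k)) * (ε (1 + k + 1) - 2 * ε (1 + k) + ε (1 + k - 1))
      = g (k + 1) + conj (g k) - 2 * (Complex.normSq (ε (k + 1)) : ℂ) := by
    intro k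
    rw [add_comm 1 k, Nat.add_sub_cancel, Complex.normSq_eq_conj_mul_self]
    simp only [g, map_mul, Complex.conj_conj]
    ring
  have hg0 : g 0 = 0 := by simp [g, h0]
  have hgN : g N = 0 := by simp [g, hN]
  rw [← Ico_add_one_right_eq_Icc, sum_Ico_eq_sum_range, Nat.add_sub_cancel]
  simp only [hterm, sum_sub_distrib, sum_add_distrib]
  have hshift : ∑ k ∈ range N, g (k + 1) = ∑ k ∈ range N, g k := by
    have h1 := sum_range_succ' g N
    have h2 := sum_range_succ g N
    rw [hg0, add_zero] at h1
    rw [hgN, add_zero] at h2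
    rw [← h1, h2]
  rw [hshift, ← map_sum]
  simp [Complex.im_sum]

/-- Discrete one-sided estimate for the cubic Schrödinger nonlinearity for
grid functions `u, v` with homogeneous Dirichlet boundary conditions, a
nonnegative grid function `F`, and `ε = u − v`:
`∑_{l=1}^{N} Re[conj(ε(l)) (i δ₊δ₋ε(l) + i λ (|u(l)|²u(l) − |v(l)|²v(l)) − (1/2)F(l)ε(l))] h
  ≤ ‖u‖_{l∞_h} ‖v‖_{l∞_h} ‖ε‖_h²`. -/
theorem discrete_one_sided_cubic_estimate (N : ℕ) (h : ℝ) (hh : h = 1 / (N + 1))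
    (lam : ℝ) (hlam : lam = 1 ∨ lam = -1)
    (u v : ℕ → ℂ) (hu0 : u 0 = 0) (huN : u (N + 1) = 0)
    (hv0 : v 0 = 0) (hvN : v (N + 1) = 0)
    (F : ℕ → ℝ) (hF : ∀ l, 0 ≤ F l)
    (ε : ℕ → ℂ) (hε : ∀ l, ε l = u l - v l) :
    (∑ l ∈ Finset.Icc 1 N,
        ((starRingEnd ℂ) (ε l)
          * (Complex.I * ((ε (l + 1) - 2 * ε l + ε (l - 1)) / (h : ℂ) ^ 2)
            + Complex.I * (lam : ℂ)
              * (((‖u l‖ : ℝ) : ℂ) ^ 2 * u l - ((‖v l‖ : ℝ) : ℂ) ^ 2 * v l)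
            - (1 / 2 : ℂ) * (F l : ℂ) * ε l)).re * h)
      ≤ ((Finset.range (N + 2)).sup' (by simp) fun l => ‖u l‖)
        * ((Finset.range (N + 2)).sup' (by simp) fun l => ‖v l‖)
        * (∑ l ∈ Finset.range (N + 2), ‖ε l‖ ^ 2 * h) := by
  have hh0 : 0 ≤ h := by rw [hh]; positivity
  have hlam1 : |lam| ≤ 1 := by rcases hlam with rfl | rfl <;> norm_num
  set MU := (range (N + 2)).sup' _ fun l => ‖u l‖
  set MV := (range (N + 2)).sup' _ fun l => ‖v l‖
  have hMU : 0 ≤ MU := le_sup'_of_le _ (by simp) (norm_nonneg (u 0))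
  have hlaplacian := im_sum_conj_mul_second_difference_eq_zero N
    (ε := ε) (by rw [hε, hu0, hv0, sub_zero]) (by rw [hε, huN, hvN, sub_zero])
  have hIcc : Icc 1 N ⊆ range (N + 2) := fun l hl => by simp only [mem_Icc, mem_range] at hl ⊢; omega
  rw [sum_congr rfl fun l _ => by rw [Complex.re_conj_mul_schrodinger_rhs, add_mul],
    sum_add_distrib, ← sum_mul, ← sum_div, sum_neg_distrib, ← Complex.im_sum, hlaplacian,
    neg_zero, zero_div, zero_mul, zero_add, mul_sum]
  calc _ ≤ ∑ l ∈ Icc 1 N, MU * MV * (‖ε l‖ ^ 2 * h) := by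
        refine sum_le_sum fun l hl => ?_
        have hcubic := Complex.neg_mul_im_conj_sub_mul_cubic_le hlam1 (u l) (v l)
        rw [← hε] at hcubic
        have hdamping : 0 ≤ F l / 2 * ‖ε l‖ ^ 2 := by have := hF l; positivity
        have huv : ‖u l‖ * ‖v l‖ ≤ MU * MV :=
          mul_le_mul (le_sup' (‖u ·‖) (hIcc hl)) (le_sup' (‖v ·‖) (hIcc hl)) (norm_nonneg _) hMU
        rw [← mul_assoc]
        refine mul_le_mul_of_nonneg_right ?_ hh0
        linarith [mul_le_mul_of_nonneg_right huv (sq_nonneg ‖ε l‖)]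
    _ ≤ ∑ l ∈ range (N + 2), MU * MV * (‖ε l‖ ^ 2 * h) := by
        refine sum_le_sum_of_subset_of_nonneg hIcc fun l _ _ => ?_
        have hMV : 0 ≤ MV := le_sup'_of_le _ (by simp) (norm_nonneg (v 0))
        positivity
end

section
/- Let f : ℝ → ℂ be continuously differentiable on [0,1]. Then the one-dimensional Sobolev embedding with explicit constant holds: sup_{x ∈ [0,1]} |f(x)|² ≤ 2 ( ∫₀¹ |f(x)|² dx + ∫₀¹ |f'(x)|² dx ), i.e. ‖f‖_{L∞} ≤ √2 (‖f‖_{L²}² + ‖f'‖_{L²}²)^{1/2}. -/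
/-!
The derivative of `‖f‖²` is `2⟪f, f'⟫`, which is bounded in absolute value by
`‖f‖² + ‖f'‖²`. Hence, by the fundamental theorem of calculus,
`‖f x‖² ≤ ‖f y‖² + ∫₀¹ (‖f‖² + ‖f'‖²)` for all `x, y ∈ [0, 1]`, and averaging over `y`
gives `‖f x‖² ≤ 2 ∫₀¹ ‖f‖² + ∫₀¹ ‖f'‖²`.
-/

open intervalIntegral Set MeasureTheory

theorem norm_sub_le_integral_norm_deriv {E : Type*} [NormedAddCommGroup E] [NormedSpace ℝ E]
    [CompleteSpace E] {g g' : ℝ → E} {a b x y : ℝ}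
    (hderiv : ∀ t ∈ Icc a b, HasDerivWithinAt g (g' t) (Icc a b) t)
    (hint : IntervalIntegrable g' volume a b) (hx : x ∈ Icc a b) (hy : y ∈ Icc a b) :
    ‖g y - g x‖ ≤ ∫ t in a..b, ‖g' t‖ := by
  wlog hxy : x ≤ y generalizing x y
  · rw [norm_sub_rev]
    exact this hy hx (le_of_not_ge hxy)
  have hsub : Icc x y ⊆ Icc a b := Icc_subset_Icc hx.1 hy.2
  have hftc : ∫ t in x..y, g' t = g y - g x := by
    refine integral_eq_sub_of_hasDerivAt_of_le hxy
      (fun t ht => (hderiv t (hsub ht)).continuousWithinAt.mono hsub) (fun t ht => ?_)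
      (hint.mono_set (by rwa [uIcc_of_le hxy, uIcc_of_le (hx.1.trans hx.2)]))
    exact (hderiv t (hsub (Ioo_subset_Icc_self ht))).hasDerivAt
      (Icc_mem_nhds (hx.1.trans_lt ht.1) (ht.2.trans_le hy.2))
  calc ‖g y - g x‖ = ‖∫ t in x..y, g' t‖ := by rw [hftc]
    _ ≤ ∫ t in x..y, ‖g' t‖ := norm_integral_le_integral_norm hxy
    _ ≤ ∫ t in a..b, ‖g' t‖ :=
      integral_mono_interval hx.1 hxy hy.2 (.of_forall fun t => norm_nonneg _) hint.norm

theorem sub_mul_le_integral_add_sub_mul_integral_abs_deriv {g g' : ℝ → ℝ} {a b x : ℝ}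
    (hderiv : ∀ t ∈ Icc a b, HasDerivWithinAt g (g' t) (Icc a b) t)
    (hint : IntervalIntegrable g' volume a b) (hx : x ∈ Icc a b) :
    (b - a) * g x ≤ (∫ t in a..b, g t) + (b - a) * ∫ t in a..b, |g' t| := by
  have hab : a ≤ b := hx.1.trans hx.2
  have hg : ContinuousOn g (Icc a b) := fun t ht => (hderiv t ht).continuousWithinAt
  have hlower : ∀ y ∈ Icc a b, g x - ∫ t in a..b, |g' t| ≤ g y := fun y hy => by
    have := norm_sub_le_integral_norm_deriv hderiv hint hy hx
    simp only [Real.norm_eq_abs] at this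
    linarith [le_abs_self (g x - g y)]
  have hintegrated := calc
    (b - a) * (g x - ∫ t in a..b, |g' t|) = ∫ _ in a..b, (g x - ∫ t in a..b, |g' t|) := by
      rw [intervalIntegral.integral_const, smul_eq_mul]
    _ ≤ ∫ t in a..b, g t :=
      integral_mono_on hab intervalIntegrable_const (hg.intervalIntegrable_of_Icc hab) hlower
  linarith

theorem sub_mul_norm_sq_le_integrals_norm_sq {F : Type*} [NormedAddCommGroup F]
    [InnerProductSpace ℝ F] {f f' : ℝ → F} {a b x : ℝ}
    (hderiv : ∀ t ∈ Icc a b, HasDerivWithinAt f (f' t) (Icc a b) t)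
    (hcont : ContinuousOn f' (Icc a b)) (hx : x ∈ Icc a b) :
    (b - a) * ‖f x‖ ^ 2 ≤
      (1 + (b - a)) * (∫ t in a..b, ‖f t‖ ^ 2) + (b - a) * ∫ t in a..b, ‖f' t‖ ^ 2 := by
  have hab : a ≤ b := hx.1.trans hx.2
  have hf : ContinuousOn f (Icc a b) := fun t ht => (hderiv t ht).continuousWithinAt
  have hinner : ContinuousOn (fun t => 2 * inner ℝ (f t) (f' t)) (Icc a b) :=
    continuousOn_const.mul (hf.inner hcont)
  have hfsq : IntervalIntegrable (fun t => ‖f t‖ ^ 2) volume a b :=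
    (hf.norm.pow 2).intervalIntegrable_of_Icc hab
  have hf'sq : IntervalIntegrable (fun t => ‖f' t‖ ^ 2) volume a b :=
    (hcont.norm.pow 2).intervalIntegrable_of_Icc hab
  have hbound : ∀ t ∈ Icc a b, |2 * inner ℝ (f t) (f' t)| ≤ ‖f t‖ ^ 2 + ‖f' t‖ ^ 2 :=
    fun t _ => by
      rw [abs_mul, abs_two]
      nlinarith [abs_real_inner_le_norm (f t) (f' t), two_mul_le_add_sq ‖f t‖ ‖f' t‖]
  have hsq :=
    sub_mul_le_integral_add_sub_mul_integral_abs_deriv (fun t ht => (hderiv t ht).norm_sq)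
      (hinner.intervalIntegrable_of_Icc hab) hx
  have hint_abs : ∫ t in a..b, |2 * inner ℝ (f t) (f' t)| ≤
      (∫ t in a..b, ‖f t‖ ^ 2) + ∫ t in a..b, ‖f' t‖ ^ 2 := by
    rw [← integral_add hfsq hf'sq]
    exact integral_mono_on hab (hinner.abs.intervalIntegrable_of_Icc hab) (hfsq.add hf'sq)
      hbound
  linarith [mul_le_mul_of_nonneg_left hint_abs (sub_nonneg.2 hab)]

/-- One-dimensional Sobolev embedding with explicit constant: if `f` is
continuously differentiable on `[0,1]` (with derivative `f'`), then
`sup_{x ∈ [0,1]} |f x|² ≤ 2 (∫₀¹ |f|² + ∫₀¹ |f'|²)`. -/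
theorem sobolev_embedding_one_dim (f f' : ℝ → ℂ)
    (hderiv : ∀ x ∈ Set.Icc (0 : ℝ) 1, HasDerivWithinAt f (f' x) (Set.Icc 0 1) x)
    (hcont : ContinuousOn f' (Set.Icc 0 1)) :
    ∀ x ∈ Set.Icc (0 : ℝ) 1, ‖f x‖ ^ 2 ≤
      2 * ((∫ x in (0 : ℝ)..1, ‖f x‖ ^ 2)
        + ∫ x in (0 : ℝ)..1, ‖f' x‖ ^ 2) := by
  intro x hx
  have hsup := sub_mul_norm_sq_le_integrals_norm_sq hderiv hcont hx
  have hf'sq_nonneg : 0 ≤ ∫ t in (0 : ℝ)..1, ‖f' t‖ ^ 2 :=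
    integral_nonneg zero_le_one fun t _ => by positivity
  rw [sub_zero, one_mul] at hsup
  linarith
end
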